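/- Let X and Y be complex Banach spaces, A ∈ B(X), B ∈ B(Y), C ∈ B(Y, X), and let M_C ∈ B(X ⊕ Y) be the upper-triangular operator matrix M_C(x, y) = (Ax + Cy, By). Then σ_SF−(M_C) ∪ S(B) = σ_SF−(A) ∪ σ_SF−(B) ∪ S(B), where σ_SF− denotes the lower semi-Fredholm spectrum and S(B) the set of points where B fails to have the single valued extension property. -/

import Mathlib

noncomputable section

open ContinuousLinearMap Metric Set

variable {E : Type*} [NormedAddCommGroup E] [NormedSpace ℂ E]
variable {X Y : Type*} [NormedAddCommGroup X] [NormedSpace ℂ X] [CompleteSpace X]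
  [NormedAddCommGroup Y] [NormedSpace ℂ Y] [CompleteSpace Y]

/-- `T` is lower semi-Fredholm: its range has finite codimension. -/
def IsLowerSemiFredholm (T : E →L[ℂ] E) : Prop :=
  FiniteDimensional ℂ (E ⧸ LinearMap.range (T : E →ₗ[ℂ] E))

/-- The lower semi-Fredholm spectrum. -/
def lowerSFSpectrum (T : E →L[ℂ] E) : Set ℂ :=
  {z | ¬ IsLowerSemiFredholm (T - z • 1)}

/-- `T` has the single valued extension property at `z₀`. -/
def HasSVEPAt (T : E →L[ℂ] E) (z₀ : ℂ) : Prop :=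
  ∃ r > (0 : ℝ), ∀ V : Set ℂ, V ⊆ ball z₀ r → IsOpen V →
    ∀ f : ℂ → E, AnalyticOnNhd ℂ f V → (∀ z ∈ V, (T - z • 1) (f z) = 0) →
      ∀ z ∈ V, f z = 0

/-- `S(T)`: the set of points where `T` fails to have the SVEP. -/
def svepFail (T : E →L[ℂ] E) : Set ℂ :=
  {z | ¬ HasSVEPAt T z}

/-- The upper-triangular operator matrix `M_C (x, y) = (A x + C y, B y)` on `X ⊕ Y`. -/
def ucMat (A : X →L[ℂ] X) (B : Y →L[ℂ] Y) (C : Y →L[ℂ] X) :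
    (X × Y) →L[ℂ] (X × Y) :=
  (A.comp (ContinuousLinearMap.fst ℂ X Y) + C.comp (ContinuousLinearMap.snd ℂ X Y)).prod
    (B.comp (ContinuousLinearMap.snd ℂ X Y))

/-!
At a point `z` where `B` has the SVEP, `M_C - z` is lower semi-Fredholm if and only if `A - z` and
`B - z` are. Everything here is linear algebra except one implication: the range of `M_C - z`
controls `ran (A - z) + C (ker (B - z))`, so we need `ker (B - z)` to be finite-dimensional, and
this is where the SVEP enters.

Suppose `T = B - z` is lower semi-Fredholm with an infinite-dimensional kernel. Near `z`, every
`T - w` stays lower semi-Fredholm with a nontrivial kernel. Pick a nearby `w₀` where the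
codimension of `ran (T - w₀)` is minimal and a complement `q` of `ran (T - w₀)`. Then `q` remains
a complement of `ran (T - w)` for `w` near `w₀`. Solving `(T - w) x + j = 0` with `j ∈ q` by a power
series in `w - w₀` (the coefficients come from the open mapping theorem), starting from a nonzero
`x₀ ∈ ker (T - w₀)`, gives a nonzero analytic function `x(w) ∈ ker (T - w)`, which contradicts the
SVEP.
-/

namespace Submodule

section Ring

variable {R V W : Type*} [Ring R] [AddCommGroup V] [Module R V] [AddCommGroup W] [Module R W]
  {p q : Submodule R V}

lemma CoFG.of_sup_eq_top (hq : q.FG) (h : p ⊔ q = ⊤) : p.CoFG :=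
  hq.cofg_of_codisjoint (codisjoint_iff.2 (by rwa [sup_comm]))

lemma CoFG.of_le_comap {f : V →ₗ[R] W} (hf : Function.Surjective f) {p' : Submodule R W}
    (hp : p.CoFG) (h : p ≤ p'.comap f) : p'.CoFG :=
  Module.Finite.of_surjective (p.mapQ p' f h) <| by
    rw [← LinearMap.range_eq_top, range_mapQ, LinearMap.range_eq_top.2 hf, map_top, range_mkQ]

end Ring

variable {K V W : Type*} [DivisionRing K] [AddCommGroup V] [Module K V] [AddCommGroup W]
  [Module K W] {p q : Submodule K V}

lemma CoFG.of_sup (hpq : (p ⊔ q).CoFG) (hq : q.FG) : p.CoFG := by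
  obtain ⟨r, hr⟩ := (p ⊔ q).exists_isCompl
  refine .of_sup_eq_top (hq.sup (hpq.fg_of_isCompl hr)) ?_
  rw [← sup_assoc, hr.sup_eq_top]

lemma CoFG.comap (f : V →ₗ[K] W) {p : Submodule K W} (hp : p.CoFG) : (p.comap f).CoFG := by
  rw [← ker_mkQ p, ← LinearMap.ker_comp]
  exact CoFG.ker _

lemma CoFG.exists_isCompl_finrank_eq (hp : p.CoFG) :
    ∃ q : Submodule K V, IsCompl p q ∧ FiniteDimensional K q ∧
      Module.finrank K q = Module.finrank K (V ⧸ p) := by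
  obtain ⟨q, hq⟩ := p.exists_isCompl
  let e := quotientEquivOfIsCompl p q hq
  exact ⟨q, hq, Module.Finite.equiv e, e.finrank_eq.symm⟩

lemma isCompl_of_sup_eq_top_of_finrank_le [FiniteDimensional K q] (h : p ⊔ q = ⊤)
    (hq : Module.finrank K q ≤ Module.finrank K (V ⧸ p)) : IsCompl p q := by
  have hsurj : LinearMap.range (p.mkQ ∘ₗ q.subtype) = ⊤ := by
    rw [LinearMap.range_comp, range_subtype, map_mkQ_eq_top, h]
  have hrank := (p.mkQ ∘ₗ q.subtype).finrank_range_add_finrank_ker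
  rw [hsurj, finrank_top, LinearMap.ker_comp, ker_mkQ] at hrank
  have hdisj : Disjoint q p := by
    rw [disjoint_iff_comap_eq_bot, ← finrank_eq_zero]
    omega
  exact ⟨hdisj.symm, codisjoint_iff.2 h⟩

end Submodule

namespace LinearMap

variable {K V W U : Type*} [DivisionRing K] [AddCommGroup V] [Module K V] [AddCommGroup W]
  [Module K W] [AddCommGroup U] [Module K U]

lemma ker_ne_bot_of_linearIndependent_mem_ker_coprod [FiniteDimensional K U] {ι : Type*}
    [Fintype ι] (f : V →ₗ[K] W) (g : U →ₗ[K] W) (hcard : Module.finrank K U < Fintype.card ι)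
    {w : ι → V × U} (hw : LinearIndependent K w) (hker : ∀ i, w i ∈ ker (f.coprod g)) :
    ker f ≠ ⊥ := by
  have hdep : ¬ LinearIndependent K (fun i => (w i).2) :=
    fun h => hcard.not_ge h.fintype_card_le_finrank
  obtain ⟨c, hc, i, hci⟩ := Fintype.not_linearIndependent_iff.1 hdep
  set x := ∑ i, c i • w i
  have hx : x ≠ 0 := fun hx => hci (Fintype.linearIndependent_iff.1 hw c hx i)
  have hx₂ : x.2 = 0 := by simpa [x, Prod.snd_sum] using hc
  have hx₁ : f x.1 = 0 := by
    have hxker : x ∈ ker (f.coprod g) :=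
      Submodule.sum_mem _ fun i _ => Submodule.smul_mem _ _ (hker i)
    simpa [hx₂] using hxker
  rw [Submodule.ne_bot_iff]
  exact ⟨x.1, hx₁, fun h => hx (Prod.ext h hx₂)⟩

end LinearMap

section PowerSeries

variable {𝕜 F : Type*} [NontriviallyNormedField 𝕜] [NormedAddCommGroup F] [NormedSpace 𝕜 F]
  [CompleteSpace F]

lemma exists_analyticOnNhd_hasSum_pow_smul (u : ℕ → F) {M a : ℝ} (ha : 0 < a)
    (hu : ∀ n, ‖u n‖ ≤ M * a ^ n) (z₀ : 𝕜) :
    ∃ f : 𝕜 → F, AnalyticOnNhd 𝕜 f (ball z₀ a⁻¹) ∧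
      ∀ z ∈ ball z₀ a⁻¹, HasSum (fun n => (z - z₀) ^ n • u n) (f z) := by
  let p : FormalMultilinearSeries 𝕜 𝕜 F :=
    fun n => ContinuousMultilinearMap.mkPiRing 𝕜 (Fin n) (u n)
  have hr : ENNReal.ofReal a⁻¹ ≤ p.radius := by
    refine p.le_radius_of_bound M fun n => ?_
    rw [ContinuousMultilinearMap.norm_mkPiRing, Real.coe_toNNReal _ (by positivity), inv_pow]
    calc ‖u n‖ * (a ^ n)⁻¹ ≤ M * a ^ n * (a ^ n)⁻¹ := by gcongr; exact hu n
      _ = M := by field_simp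
  have hp := p.hasFPowerSeriesOnBall ((ENNReal.ofReal_pos.2 (by positivity)).trans_le hr)
  have hmem : ∀ z ∈ ball z₀ a⁻¹, z - z₀ ∈ eball 0 p.radius := fun z hz =>
    Metric.mem_eball.2 ((edist_lt_ofReal.2 (by rwa [dist_zero_right, ← dist_eq_norm])).trans_le hr)
  refine ⟨fun z => p.sum (z - z₀), fun z hz => ?_, fun z hz => ?_⟩
  · exact (hp.analyticOnNhd _ (hmem z hz)).comp (f := fun z => z - z₀)
      (analyticAt_id.sub analyticAt_const)
  · simpa [p, ContinuousMultilinearMap.mkPiRing_apply] using hp.hasSum (hmem z hz)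

end PowerSeries

section Perturbation

variable {𝕜 Z F : Type*} [NontriviallyNormedField 𝕜] [NormedAddCommGroup Z] [NormedSpace 𝕜 Z]
  [CompleteSpace Z] [NormedAddCommGroup F] [NormedSpace 𝕜 F] [CompleteSpace F]

lemma exists_analyticOnNhd_sub_smul_apply_eq (S P : Z →L[𝕜] F) {μ₀ : 𝕜}
    (hS : Function.Surjective (S - μ₀ • P)) :
    ∃ ρ > 0, ∀ u₀ : Z, ∃ f : 𝕜 → Z, AnalyticOnNhd 𝕜 f (ball μ₀ ρ) ∧ f μ₀ = u₀ ∧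
      ∀ μ ∈ ball μ₀ ρ, (S - μ • P) (f μ) = (S - μ₀ • P) u₀ := by
  set S₀ := S - μ₀ • P
  obtain ⟨C, hC, hpre⟩ := S₀.exists_preimage_norm_le hS
  choose R hSR hR using hpre
  set a := C * ‖P‖ + 1
  have ha : 0 < a := by positivity
  refine ⟨a⁻¹, by positivity, fun u₀ => ?_⟩
  -- `f μ = ∑ (μ - μ₀) ^ n • u n` with `S₀ (u (n + 1)) = P (u n)` solves
  -- `S₀ (f μ) = S₀ u₀ + (μ - μ₀) • P (f μ)`; the bound on `R` makes the series converge.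
  set u : ℕ → Z := fun n => (R ∘ P)^[n] u₀
  have hu_succ : ∀ n, u (n + 1) = R (P (u n)) := fun n => Function.iterate_succ_apply' _ _ _
  have hu : ∀ n, ‖u n‖ ≤ ‖u₀‖ * a ^ n := by
    intro n
    induction n with
    | zero => simp [u]
    | succ n ih =>
      calc ‖u (n + 1)‖ ≤ C * (‖P‖ * ‖u n‖) := by
            rw [hu_succ]; exact (hR _).trans (by gcongr; exact P.le_opNorm _)
        _ = (C * ‖P‖) * ‖u n‖ := by ring
        _ ≤ a * (‖u₀‖ * a ^ n) := by gcongr; exact le_add_of_nonneg_right zero_le_one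
        _ = ‖u₀‖ * a ^ (n + 1) := by ring
  obtain ⟨f, hf, hsum⟩ := exists_analyticOnNhd_hasSum_pow_smul u ha hu μ₀
  refine ⟨f, hf, ?_, fun μ hμ => ?_⟩
  · refine (hsum μ₀ (mem_ball_self (by positivity))).unique ?_
    convert hasSum_single (f := fun n => (μ₀ - μ₀) ^ n • u n) 0 _ using 1
    · simp [u]
    · intro n hn; simp [hn]
  · have hS₀ := (hsum μ hμ).mapL S₀
    rw [← hasSum_nat_add_iff' 1] at hS₀
    simp only [Finset.sum_range_one, pow_zero, one_smul, map_smul, pow_succ', mul_smul,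
      hu_succ, hSR] at hS₀
    have hshift : S₀ (f μ) - S₀ u₀ = (μ - μ₀) • P (f μ) :=
      hS₀.unique (by simpa only [map_smul] using ((hsum μ hμ).mapL P).const_smul (μ - μ₀))
    calc (S - μ • P) (f μ) = S₀ (f μ) - (μ - μ₀) • P (f μ) := by
          simp only [S₀, sub_apply, smul_apply, sub_smul]
          abel
      _ = S₀ u₀ := by rw [← hshift]; abel

end Perturbation

open Filter Topology

lemma isLowerSemiFredholm_iff_cofg {T : E →L[ℂ] E} :
    IsLowerSemiFredholm T ↔ (LinearMap.range T.toLinearMap).CoFG :=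
  Iff.rfl

section LocalSpectralTheory

lemma coprod_sub_smul_fst {U : Type*} [NormedAddCommGroup U] [NormedSpace ℂ U]
    (T : E →L[ℂ] E) (J : U →L[ℂ] E) (z : ℂ) :
    T.coprod J - z • fst ℂ E U = (T - z • 1).coprod J := by
  ext <;> simp

lemma surjective_coprod_sub_smul_fst_iff (T : E →L[ℂ] E) (q : Submodule ℂ E) (z : ℂ) :
    Function.Surjective (T.coprod q.subtypeL - z • fst ℂ E q) ↔
      LinearMap.range (T - z • 1).toLinearMap ⊔ q = ⊤ := by
  rw [coprod_sub_smul_fst, ← coe_coe, ← LinearMap.range_eq_top, coe_coprod, LinearMap.range_coprod,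
    Submodule.toLinearMap_subtypeL, Submodule.range_subtype]

variable [CompleteSpace E]

lemma eventually_range_sub_smul_sup_eq_top (T : E →L[ℂ] E) {z₀ : ℂ} (q : Submodule ℂ E)
    [FiniteDimensional ℂ q] (h : LinearMap.range (T - z₀ • 1).toLinearMap ⊔ q = ⊤) :
    ∀ᶠ z in 𝓝 z₀, LinearMap.range (T - z • 1).toLinearMap ⊔ q = ⊤ := by
  rw [← surjective_coprod_sub_smul_fst_iff] at h
  obtain ⟨ρ, hρ, hsec⟩ := exists_analyticOnNhd_sub_smul_apply_eq _ _ h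
  filter_upwards [ball_mem_nhds z₀ hρ] with z hz
  refine (surjective_coprod_sub_smul_fst_iff T q z).1 fun v => ?_
  obtain ⟨u₀, rfl⟩ := h v
  obtain ⟨f, -, -, hf⟩ := hsec u₀
  exact ⟨f z, hf z hz⟩

lemma IsLowerSemiFredholm.eventually {T : E →L[ℂ] E} {z₀ : ℂ}
    (hT : IsLowerSemiFredholm (T - z₀ • 1)) : ∀ᶠ z in 𝓝 z₀, IsLowerSemiFredholm (T - z • 1) := by
  obtain ⟨q, hq, hqfd, -⟩ := (isLowerSemiFredholm_iff_cofg.1 hT).exists_isCompl_finrank_eq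
  filter_upwards [eventually_range_sub_smul_sup_eq_top T q hq.sup_eq_top] with z hz
  exact Submodule.CoFG.of_sup_eq_top (Module.Finite.iff_fg.1 hqfd) hz

lemma eventually_ker_sub_smul_ne_bot {T : E →L[ℂ] E} {z₀ : ℂ}
    (hT : IsLowerSemiFredholm (T - z₀ • 1))
    (hker : ¬ FiniteDimensional ℂ (LinearMap.ker (T - z₀ • 1).toLinearMap)) :
    ∀ᶠ z in 𝓝 z₀, LinearMap.ker (T - z • 1).toLinearMap ≠ ⊥ := by
  obtain ⟨q, hq, hqfd, -⟩ := (isLowerSemiFredholm_iff_cofg.1 hT).exists_isCompl_finrank_eq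
  set N := LinearMap.ker (T - z₀ • 1).toLinearMap
  obtain ⟨s, hs, hli⟩ : ∃ s : Finset N, s.card = Module.finrank ℂ q + 1 ∧
      LinearIndependent ℂ ((↑) : s → N) := by
    refine le_rank_iff_exists_linearIndependent_finset.1 ?_
    exact Cardinal.natCast_lt_aleph0.le.trans (not_lt.1 (mt Module.rank_lt_aleph0_iff.1 hker))
  -- Analytic solutions through `finrank q + 1` independent kernel vectors stay independent near
  -- `z₀`, so some nonzero combination of them has vanishing `q`-component.
  let u : s → E × q := fun i => ((i : N), 0)
  have hu : LinearIndependent ℂ u :=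
    (hli.map' N.subtype N.ker_subtype).map' (LinearMap.inl ℂ E q) (Submodule.ker_inl ..)
  obtain ⟨ρ, hρ, hsec⟩ := exists_analyticOnNhd_sub_smul_apply_eq _ _
    ((surjective_coprod_sub_smul_fst_iff T q z₀).2 hq.sup_eq_top)
  choose f hf hf₀ hfeq using hsec
  have hlim : Tendsto (fun z i => f (u i) z) (𝓝 z₀) (𝓝 u) := tendsto_pi_nhds.2 fun i => by
    simpa [hf₀] using (hf (u i) z₀ (mem_ball_self hρ)).continuousAt.tendsto
  filter_upwards [hlim.eventually hu.eventually, ball_mem_nhds z₀ hρ] with z hind hz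
  refine LinearMap.ker_ne_bot_of_linearIndependent_mem_ker_coprod _ q.subtype
    (by simp [hs]) hind fun i => ?_
  have hi : T (i : N) - z₀ • ((i : N) : E) = 0 := by simpa using LinearMap.mem_ker.1 (i : N).2
  have := hfeq (u i) z hz
  rw [coprod_sub_smul_fst] at this
  simpa [u, hi] using this

lemma exists_analyticAt_ker_section {T : E →L[ℂ] E} {z₀ : ℂ} {q : Submodule ℂ E}
    [FiniteDimensional ℂ q]
    (hq : ∀ᶠ z in 𝓝 z₀, IsCompl (LinearMap.range (T - z • 1).toLinearMap) q)
    {y₀ : E} (hy₀ : y₀ ∈ LinearMap.ker (T - z₀ • 1).toLinearMap) :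
    ∃ f : ℂ → E, AnalyticAt ℂ f z₀ ∧ f z₀ = y₀ ∧ ∀ᶠ z in 𝓝 z₀, (T - z • 1) (f z) = 0 := by
  obtain ⟨ρ, hρ, hsec⟩ := exists_analyticOnNhd_sub_smul_apply_eq _ _
    ((surjective_coprod_sub_smul_fst_iff T q z₀).2 hq.self_of_nhds.sup_eq_top)
  obtain ⟨g, hg, hg₀, hgeq⟩ := hsec (y₀, 0)
  refine ⟨fun z => (g z).1, ((fst ℂ E q).analyticAt _).comp (hg z₀ (mem_ball_self hρ)),
    by simp [hg₀], ?_⟩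
  filter_upwards [hq, ball_mem_nhds z₀ hρ] with z hcompl hz
  have h := hgeq z hz
  rw [coprod_sub_smul_fst, coprod_sub_smul_fst, coprod_apply, coprod_apply] at h
  simp only [Submodule.subtypeL_apply, ZeroMemClass.coe_zero, add_zero] at h
  rw [show (T - z₀ • 1) y₀ = 0 from hy₀, ← eq_neg_iff_add_eq_zero] at h
  exact Submodule.disjoint_def.1 hcompl.disjoint _ (LinearMap.mem_range_self _ _)
    (h ▸ neg_mem (g z).2.2)

lemma exists_eventually_isCompl_range {T : E →L[ℂ] E} {s : Set ℂ} (hs : IsOpen s)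
    (hne : s.Nonempty) (hT : ∀ z ∈ s, IsLowerSemiFredholm (T - z • 1)) :
    ∃ z₀ ∈ s, ∃ q : Submodule ℂ E, FiniteDimensional ℂ q ∧
      ∀ᶠ z in 𝓝 z₀, IsCompl (LinearMap.range (T - z • 1).toLinearMap) q := by
  let codim (z : ℂ) : ℕ :=
    Module.finrank ℂ (E ⧸ LinearMap.range (T - z • 1).toLinearMap)
  set z₀ := Function.argminOn codim s hne
  have hz₀ : z₀ ∈ s := Function.argminOn_mem codim s hne
  obtain ⟨q, hq, hqfd, hqrank⟩ :=
    (isLowerSemiFredholm_iff_cofg.1 (hT z₀ hz₀)).exists_isCompl_finrank_eq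
  refine ⟨z₀, hz₀, q, hqfd, ?_⟩
  filter_upwards [eventually_range_sub_smul_sup_eq_top T q hq.sup_eq_top, hs.mem_nhds hz₀]
    with z hsup hz
  exact Submodule.isCompl_of_sup_eq_top_of_finrank_le hsup
    (hqrank.trans_le (Function.argminOn_le codim s hz))

lemma HasSVEPAt.eventually_eq_zero {T : E →L[ℂ] E} {μ : ℂ} (h : HasSVEPAt T μ) :
    ∀ᶠ z₀ in 𝓝 μ, ∀ f : ℂ → E, AnalyticAt ℂ f z₀ →
      (∀ᶠ z in 𝓝 z₀, (T - z • 1) (f z) = 0) → f z₀ = 0 := by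
  obtain ⟨r, hr, hsvep⟩ := h
  filter_upwards [ball_mem_nhds μ hr] with z₀ hz₀ f hf hfeq
  obtain ⟨ε, hε, hball⟩ := Metric.eventually_nhds_iff_ball.1
    (hf.eventually_analyticAt.and (hfeq.and (isOpen_ball.mem_nhds hz₀)))
  exact hsvep (ball z₀ ε) (fun z hz => (hball z hz).2.2) isOpen_ball f
    (fun z hz => (hball z hz).1) (fun z hz => (hball z hz).2.1) z₀ (mem_ball_self hε)

lemma HasSVEPAt.finiteDimensional_ker {T : E →L[ℂ] E} {μ : ℂ} (hsvep : HasSVEPAt T μ)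
    (hT : IsLowerSemiFredholm (T - μ • 1)) :
    FiniteDimensional ℂ (LinearMap.ker (T - μ • 1).toLinearMap) := by
  by_contra hker
  obtain ⟨s, hsub, hs, hμs⟩ := _root_.eventually_nhds_iff.1 (hT.eventually.and
    ((eventually_ker_sub_smul_ne_bot hT hker).and hsvep.eventually_eq_zero))
  obtain ⟨z₀, hz₀, q, hq, hcompl⟩ :=
    exists_eventually_isCompl_range hs ⟨μ, hμs⟩ fun z hz => (hsub z hz).1
  obtain ⟨hne, hzero⟩ := (hsub z₀ hz₀).2
  obtain ⟨y₀, hy₀, hy₀0⟩ := (Submodule.ne_bot_iff _).1 hne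
  obtain ⟨f, hf, rfl, hfeq⟩ := exists_analyticAt_ker_section hcompl hy₀
  exact hy₀0 (hzero f hf hfeq)

end LocalSpectralTheory

section UpperTriangular

omit [CompleteSpace X] [CompleteSpace Y]

variable {A : X →L[ℂ] X} {B : Y →L[ℂ] Y} {C : Y →L[ℂ] X}

lemma ucMat_apply (p : X × Y) : ucMat A B C p = (A p.1 + C p.2, B p.2) := rfl

lemma ucMat_sub_smul (z : ℂ) : ucMat A B C - z • 1 = ucMat (A - z • 1) (B - z • 1) C := by
  ext p <;> simp [ucMat_apply]

lemma isLowerSemiFredholm_ucMat (hA : IsLowerSemiFredholm A) (hB : IsLowerSemiFredholm B) :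
    IsLowerSemiFredholm (ucMat A B C) := by
  obtain ⟨F, hF, hFfd, -⟩ := (isLowerSemiFredholm_iff_cofg.1 hA).exists_isCompl_finrank_eq
  obtain ⟨G, hG, hGfd, -⟩ := (isLowerSemiFredholm_iff_cofg.1 hB).exists_isCompl_finrank_eq
  refine Submodule.CoFG.of_sup_eq_top
    ((Module.Finite.iff_fg.1 hFfd).prod (Module.Finite.iff_fg.1 hGfd)) (eq_top_iff.2 ?_)
  rintro ⟨u, v⟩ -
  obtain ⟨_, ⟨y, rfl⟩, g, hg, rfl⟩ :=
    Submodule.mem_sup.1 (hG.sup_eq_top ▸ Submodule.mem_top : v ∈ _)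
  obtain ⟨_, ⟨x, rfl⟩, f, hf, hxf⟩ :=
    Submodule.mem_sup.1 (hF.sup_eq_top ▸ Submodule.mem_top : u - C y ∈ _)
  refine Submodule.mem_sup.2 ⟨_, ⟨(x, y), rfl⟩, (f, g), ⟨hf, hg⟩, ?_⟩
  simp only [coe_coe, ucMat_apply, Prod.mk_add_mk, Prod.mk.injEq, and_true] at hxf ⊢
  rw [add_right_comm, hxf, sub_add_cancel]

lemma IsLowerSemiFredholm.of_ucMat_right (h : IsLowerSemiFredholm (ucMat A B C)) :
    IsLowerSemiFredholm B :=
  (isLowerSemiFredholm_iff_cofg.1 h).of_le_comap LinearMap.snd_surjective <| by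
    rintro _ ⟨p, rfl⟩
    exact ⟨p.2, rfl⟩

lemma IsLowerSemiFredholm.of_ucMat_left (h : IsLowerSemiFredholm (ucMat A B C))
    (hB : FiniteDimensional ℂ (LinearMap.ker B.toLinearMap)) : IsLowerSemiFredholm A := by
  have hle : (LinearMap.range (ucMat A B C).toLinearMap).comap (LinearMap.inl ℂ X Y) ≤
      LinearMap.range A.toLinearMap ⊔ (LinearMap.ker B.toLinearMap).map C.toLinearMap := by
    rintro x ⟨⟨a, b⟩, hab⟩
    simp only [coe_coe, ucMat_apply, LinearMap.inl_apply, Prod.mk.injEq] at hab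
    exact Submodule.mem_sup.2 ⟨A a, ⟨a, rfl⟩, C b, ⟨b, hab.2, rfl⟩, hab.1⟩
  exact (((isLowerSemiFredholm_iff_cofg.1 h).comap _).of_le hle).of_sup
    ((Module.Finite.iff_fg.1 hB).map _)

lemma isLowerSemiFredholm_ucMat_iff
    (hB : IsLowerSemiFredholm B → FiniteDimensional ℂ (LinearMap.ker B.toLinearMap)) :
    IsLowerSemiFredholm (ucMat A B C) ↔ IsLowerSemiFredholm A ∧ IsLowerSemiFredholm B :=
  ⟨fun h => ⟨h.of_ucMat_left (hB h.of_ucMat_right), h.of_ucMat_right⟩,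
    fun h => isLowerSemiFredholm_ucMat h.1 h.2⟩

end UpperTriangular

theorem stmt10 (A : X →L[ℂ] X) (B : Y →L[ℂ] Y) (C : Y →L[ℂ] X) :
    lowerSFSpectrum (ucMat A B C) ∪ svepFail B =
      lowerSFSpectrum A ∪ lowerSFSpectrum B ∪ svepFail B := by
  ext z
  by_cases hz : HasSVEPAt B z
  · have key := isLowerSemiFredholm_ucMat_iff (A := A - z • 1) (C := C) hz.finiteDimensional_ker
    simp only [lowerSFSpectrum, svepFail, mem_union, mem_ofPred_eq, hz, ucMat_sub_smul, key,
      not_true_eq_false, or_false]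
    tauto
  · simp [svepFail, hz]
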